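/- Let c₁, c₂ be coprime positive integers and let d₁, d₂ be integers with c₁·d₁ ≡ 1 (mod c₂) and c₂·d₂ ≡ 1 (mod c₁). Then for all integers γ, B, C, u, v one has the multiplicativity relation S_{c₁c₂}^{B,C}(γ; u, v) = S_{c₁}^{B, C·d₂}(γ·c₂; u, v) · S_{c₂}^{B, C·d₁}(γ·c₁; u, v). -/

import Mathlib

/-- `e_c(t) = exp(2πi t / c)`. -/
noncomputable def eC (c : ℕ) (t : ℤ) : ℂ :=
  Complex.exp (2 * Real.pi * Complex.I * t / c)

/-- The Kloosterman sum `S(m, n; c) = ∑_{x mod c, (x,c)=1} e_c(m x + n x̄)`. -/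
noncomputable def Kl (m n : ℤ) (c : ℕ) : ℂ :=
  ∑ x ∈ (Finset.range c).filter (fun x => Nat.Coprime x c),
    eC c (m * x + n * (((x : ZMod c)⁻¹).val : ℤ))

/-- The sum `S_c^{B,C}(γ; u, v) = ∑_{a,b mod c} S(γa²+Ba+C, γb²+Bb+C; c)
    e_c(2γab + a(B+u) + b(B+v))`. -/
noncomputable def Sbc (γ B C u v : ℤ) (c : ℕ) : ℂ :=
  ∑ a ∈ Finset.range c, ∑ b ∈ Finset.range c,
    Kl (γ * (a : ℤ) ^ 2 + B * a + C) (γ * (b : ℤ) ^ 2 + B * b + C) c *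
      eC c (2 * γ * a * b + a * (B + u) + b * (B + v))

lemma eC_add (c : ℕ) (a b : ℤ) : eC c (a + b) = eC c a * eC c b := by
  rw [eC, eC, eC, ← Complex.exp_add]
  congr 1
  push_cast
  ring

lemma eC_congr {c : ℕ} (hc : c ≠ 0) {a b : ℤ} (h : (a : ZMod c) = (b : ZMod c)) :
    eC c a = eC c b := by
  have h' : (c : ℤ) ∣ b - a := by
    have := (ZMod.intCast_eq_intCast_iff' a b c).mp h
    exact Int.ModEq.dvd this
  obtain ⟨k, hk⟩ := h'
  have hb : b = a + c * k := by linarith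
  subst hb
  rw [eC_add]
  have : eC c ((c : ℤ) * k) = 1 := by
    rw [eC]
    have hcC : (c : ℂ) ≠ 0 := Nat.cast_ne_zero.mpr hc
    have : (2 * Real.pi * Complex.I * ((c : ℤ) * k : ℤ) / c : ℂ) = k * (2 * Real.pi * Complex.I) := by
      push_cast
      field_simp
    rw [this]
    exact_mod_cast Complex.exp_int_mul_two_pi_mul_I k
  rw [this, mul_one]

lemma eC_split {c₁ c₂ : ℕ} (h₁ : c₁ ≠ 0) (h₂ : c₂ ≠ 0) {d₁ d₂ : ℤ}
    (h : ((c₂ * d₂ + c₁ * d₁ : ℤ) : ZMod (c₁ * c₂)) = ((1 : ℤ) : ZMod (c₁ * c₂))) (t : ℤ) :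
    eC (c₁ * c₂) t = eC c₁ (d₂ * t) * eC c₂ (d₁ * t) := by
  have key : eC c₁ (d₂ * t) * eC c₂ (d₁ * t) = eC (c₁ * c₂) ((c₂ * d₂ + c₁ * d₁) * t) := by
    rw [eC, eC, eC, ← Complex.exp_add]
    congr 1
    have hc₁ : (c₁ : ℂ) ≠ 0 := Nat.cast_ne_zero.mpr h₁
    have hc₂ : (c₂ : ℂ) ≠ 0 := Nat.cast_ne_zero.mpr h₂
    push_cast
    field_simp
  rw [key]
  refine (eC_congr (by positivity) ?_).symm
  push_cast
  push_cast at h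
  rw [h, one_mul]

lemma sum_factor {α β : Type*} [Fintype α] [Fintype β] (T₁ : α → α → ℂ) (T₂ : β → β → ℂ) :
    (∑ a : α × β, ∑ b : α × β, T₁ a.1 b.1 * T₂ a.2 b.2)
      = (∑ x : α, ∑ y : α, T₁ x y) * (∑ x : β, ∑ y : β, T₂ x y) := by
  have inner : ∀ (x : α) (z : β), (∑ b : α × β, T₁ x b.1 * T₂ z b.2)
      = (∑ y : α, T₁ x y) * (∑ y : β, T₂ z y) := by
    intro x z
    rw [Fintype.sum_prod_type, Finset.sum_mul_sum]
  calc (∑ a : α × β, ∑ b : α × β, T₁ a.1 b.1 * T₂ a.2 b.2)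
      = ∑ a : α × β, (∑ y : α, T₁ a.1 y) * (∑ y : β, T₂ a.2 y) :=
        Finset.sum_congr rfl fun a _ => inner a.1 a.2
    _ = (∑ x : α, ∑ y : α, T₁ x y) * (∑ x : β, ∑ y : β, T₂ x y) := by
        rw [Fintype.sum_prod_type, Finset.sum_mul_sum]

lemma Kl_congr {c : ℕ} (hc : c ≠ 0) {m n m' n' : ℤ}
    (hm : (m : ZMod c) = (m' : ZMod c)) (hn : (n : ZMod c) = (n' : ZMod c)) :
    Kl m n c = Kl m' n' c := by
  rw [Kl, Kl]
  refine Finset.sum_congr rfl fun x _ => ?_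
  apply eC_congr hc
  push_cast
  push_cast at hm hn
  rw [hm, hn]

lemma sum_range_zmod (c : ℕ) [NeZero c] (g : ℕ → ℂ) :
    ∑ x ∈ Finset.range c, g x = ∑ a : ZMod c, g a.val := by
  refine (Finset.sum_bij' (fun (a : ZMod c) _ => a.val) (fun x _ => (x : ZMod c))
    ?_ ?_ ?_ ?_ ?_).symm
  · intro a _; exact Finset.mem_range.mpr (ZMod.val_lt a)
  · intros; exact Finset.mem_univ _
  · intro a _; exact ZMod.natCast_rightInverse a
  · intro x hx; exact ZMod.val_cast_of_lt (Finset.mem_range.mp hx)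
  · intros; rfl

lemma Kl_units (m n : ℤ) (c : ℕ) [NeZero c] :
    Kl m n c = ∑ u : (ZMod c)ˣ,
      eC c (m * ((u : ZMod c).val : ℤ) + n * (((u⁻¹ : (ZMod c)ˣ) : ZMod c).val : ℤ)) := by
  rw [Kl]
  refine Finset.sum_bij' (fun x hx => ZMod.unitOfCoprime x (Finset.mem_filter.mp hx).2)
    (fun u _ => (u : ZMod c).val) ?_ ?_ ?_ ?_ ?_
  · intros; exact Finset.mem_univ _
  · intro u _
    exact Finset.mem_filter.mpr ⟨Finset.mem_range.mpr (ZMod.val_lt _), ZMod.val_coe_unit_coprime u⟩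
  · intro x hx
    simp only [ZMod.coe_unitOfCoprime]
    exact ZMod.val_cast_of_lt (Finset.mem_range.mp (Finset.mem_filter.mp hx).1)
  · intro u _
    apply Units.ext
    simp [ZMod.coe_unitOfCoprime, ZMod.natCast_rightInverse (u : ZMod c)]
  · intro x hx
    have hco' := (Finset.mem_filter.mp hx).2
    have hlt := Finset.mem_range.mp (Finset.mem_filter.mp hx).1
    have h1 : ((ZMod.unitOfCoprime x hco' : (ZMod c)ˣ) : ZMod c) = (x : ZMod c) :=
      ZMod.coe_unitOfCoprime x hco'
    have h2 : ((x : ZMod c)).val = x := ZMod.val_cast_of_lt hlt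
    have h3 : (x : ZMod c)⁻¹ = (((ZMod.unitOfCoprime x hco')⁻¹ : (ZMod c)ˣ) : ZMod c) := by
      rw [← h1, ZMod.inv_coe_unit]
    simp only [h3, ZMod.coe_unitOfCoprime, h2]

section crt
variable {c₁ c₂ : ℕ} (hco : Nat.Coprime c₁ c₂)

lemma val_crt₁ [NeZero c₁] [NeZero c₂] (x : ZMod (c₁ * c₂)) :
    ((x.val : ℤ) : ZMod c₁) = (((ZMod.chineseRemainder hco x).1.val : ℤ) : ZMod c₁) := by
  haveI : NeZero (c₁ * c₂) := ⟨mul_ne_zero (NeZero.ne c₁) (NeZero.ne c₂)⟩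
  push_cast
  rw [ZMod.natCast_rightInverse]
  set F : ZMod (c₁ * c₂) →+* ZMod c₁ :=
    (RingHom.fst (ZMod c₁) (ZMod c₂)).comp (ZMod.chineseRemainder hco).toRingHom with hF
  have : (ZMod.chineseRemainder hco x).1 = F x := rfl
  rw [this, ← map_natCast F x.val, ZMod.natCast_rightInverse]

lemma val_crt₂ [NeZero c₁] [NeZero c₂] (x : ZMod (c₁ * c₂)) :
    ((x.val : ℤ) : ZMod c₂) = (((ZMod.chineseRemainder hco x).2.val : ℤ) : ZMod c₂) := by
  haveI : NeZero (c₁ * c₂) := ⟨mul_ne_zero (NeZero.ne c₁) (NeZero.ne c₂)⟩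
  push_cast
  rw [ZMod.natCast_rightInverse]
  set F : ZMod (c₁ * c₂) →+* ZMod c₂ :=
    (RingHom.snd (ZMod c₁) (ZMod c₂)).comp (ZMod.chineseRemainder hco).toRingHom with hF
  have : (ZMod.chineseRemainder hco x).2 = F x := rfl
  rw [this, ← map_natCast F x.val, ZMod.natCast_rightInverse]

/-- units CRT equiv -/
noncomputable def uE : (ZMod (c₁ * c₂))ˣ ≃* (ZMod c₁)ˣ × (ZMod c₂)ˣ :=
  (Units.mapEquiv (ZMod.chineseRemainder hco).toMulEquiv).trans MulEquiv.prodUnits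

lemma uE_coe₁ (u : (ZMod (c₁ * c₂))ˣ) :
    (((uE hco u).1 : (ZMod c₁)ˣ) : ZMod c₁) = (ZMod.chineseRemainder hco (u : ZMod (c₁ * c₂))).1 := rfl

lemma uE_coe₂ (u : (ZMod (c₁ * c₂))ˣ) :
    (((uE hco u).2 : (ZMod c₂)ˣ) : ZMod c₂) = (ZMod.chineseRemainder hco (u : ZMod (c₁ * c₂))).2 := rfl

end crt

lemma Kl_mul (c₁ c₂ : ℕ) [NeZero c₁] [NeZero c₂] (hco : Nat.Coprime c₁ c₂) (d₁ d₂ : ℤ)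
    (h : ((c₂ * d₂ + c₁ * d₁ : ℤ) : ZMod (c₁ * c₂)) = ((1 : ℤ) : ZMod (c₁ * c₂)))
    (m n : ℤ) :
    Kl m n (c₁ * c₂) = Kl (d₂ * m) (d₂ * n) c₁ * Kl (d₁ * m) (d₁ * n) c₂ := by
  haveI : NeZero (c₁ * c₂) := ⟨mul_ne_zero (NeZero.ne c₁) (NeZero.ne c₂)⟩
  set f : (ZMod c₁)ˣ → ℂ := fun i =>
    eC c₁ (d₂ * m * ((i : ZMod c₁).val : ℤ) + d₂ * n * (((i⁻¹ : (ZMod c₁)ˣ) : ZMod c₁).val : ℤ))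
    with hf
  set g : (ZMod c₂)ˣ → ℂ := fun j =>
    eC c₂ (d₁ * m * ((j : ZMod c₂).val : ℤ) + d₁ * n * (((j⁻¹ : (ZMod c₂)ˣ) : ZMod c₂).val : ℤ))
    with hg
  have key : Kl m n (c₁ * c₂) = ∑ p : (ZMod c₁)ˣ × (ZMod c₂)ˣ, f p.1 * g p.2 := by
    rw [Kl_units]
    refine Fintype.sum_equiv (uE hco).toEquiv _ _ fun u => ?_
    have hsplit := eC_split (NeZero.ne c₁) (NeZero.ne c₂) h
      (m * ((u : ZMod (c₁ * c₂)).val : ℤ)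
        + n * (((u⁻¹ : (ZMod (c₁ * c₂))ˣ) : ZMod (c₁ * c₂)).val : ℤ))
    rw [hsplit]
    have hE : (uE hco).toEquiv u = uE hco u := rfl
    rw [hE]
    have hiuE : uE hco u⁻¹ = (uE hco u)⁻¹ := map_inv _ u
    congr 1
    · apply eC_congr (NeZero.ne c₁)
      have h1 : (((u : ZMod (c₁ * c₂)).val : ℤ) : ZMod c₁)
          = ((((uE hco u).1 : ZMod c₁).val : ℤ) : ZMod c₁) := by
        rw [val_crt₁ hco, uE_coe₁]
      have h2 : ((((u⁻¹ : (ZMod (c₁ * c₂))ˣ) : ZMod (c₁ * c₂)).val : ℤ) : ZMod c₁)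
          = (((((uE hco u).1⁻¹ : (ZMod c₁)ˣ) : ZMod c₁).val : ℤ) : ZMod c₁) := by
        rw [val_crt₁ hco, ← uE_coe₁ hco u⁻¹, hiuE, Prod.fst_inv]
      push_cast at h1 h2 ⊢
      rw [h1, h2]; ring
    · apply eC_congr (NeZero.ne c₂)
      have h1 : (((u : ZMod (c₁ * c₂)).val : ℤ) : ZMod c₂)
          = ((((uE hco u).2 : ZMod c₂).val : ℤ) : ZMod c₂) := by
        rw [val_crt₂ hco, uE_coe₂]
      have h2 : ((((u⁻¹ : (ZMod (c₁ * c₂))ˣ) : ZMod (c₁ * c₂)).val : ℤ) : ZMod c₂)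
          = (((((uE hco u).2⁻¹ : (ZMod c₂)ˣ) : ZMod c₂).val : ℤ) : ZMod c₂) := by
        rw [val_crt₂ hco, ← uE_coe₂ hco u⁻¹, hiuE, Prod.snd_inv]
      push_cast at h1 h2 ⊢
      rw [h1, h2]; ring
  rw [key, Fintype.sum_prod_type, Kl_units, Kl_units, Finset.sum_mul_sum]

lemma Sbc_zmod (γ B C u v : ℤ) (c : ℕ) [NeZero c] :
    Sbc γ B C u v c = ∑ a : ZMod c, ∑ b : ZMod c,
      Kl (γ * (a.val : ℤ) ^ 2 + B * a.val + C) (γ * (b.val : ℤ) ^ 2 + B * b.val + C) c *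
        eC c (2 * γ * a.val * b.val + a.val * (B + u) + b.val * (B + v)) := by
  rw [Sbc, sum_range_zmod c]
  exact Finset.sum_congr rfl fun a _ => sum_range_zmod c _

set_option maxHeartbeats 1000000 in
/-- Multiplicativity of `S_c^{B,C}(γ; u, v)` in `c`: if `c = c₁ c₂` with
`(c₁, c₂) = 1`, `c₁ d₁ ≡ 1 (mod c₂)` and `c₂ d₂ ≡ 1 (mod c₁)`, then
`S_{c₁c₂}^{B,C}(γ) = S_{c₁}^{B,Cd₂}(γc₂) · S_{c₂}^{B,Cd₁}(γc₁)`. -/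
theorem statement4 (c₁ c₂ : ℕ) (h₁ : 0 < c₁) (h₂ : 0 < c₂)
    (hco : Nat.Coprime c₁ c₂) (d₁ d₂ : ℤ)
    (hd₁ : Int.ModEq (c₂ : ℤ) ((c₁ : ℤ) * d₁) 1)
    (hd₂ : Int.ModEq (c₁ : ℤ) ((c₂ : ℤ) * d₂) 1)
    (γ B C u v : ℤ) :
    Sbc γ B C u v (c₁ * c₂) =
      Sbc (γ * c₂) B (C * d₂) u v c₁ * Sbc (γ * c₁) B (C * d₁) u v c₂ := by
  haveI : NeZero c₁ := ⟨h₁.ne'⟩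
  haveI : NeZero c₂ := ⟨h₂.ne'⟩
  haveI : NeZero (c₁ * c₂) := ⟨mul_ne_zero h₁.ne' h₂.ne'⟩
  have hc₂d₂ : (c₂ : ZMod c₁) * (d₂ : ZMod c₁) = 1 := by
    have h' : (((c₂ : ℤ) * d₂ : ℤ) : ZMod c₁) = ((1 : ℤ) : ZMod c₁) :=
      (ZMod.intCast_eq_intCast_iff' _ _ _).mpr hd₂
    push_cast at h'
    exact h'
  have hc₁d₁ : (c₁ : ZMod c₂) * (d₁ : ZMod c₂) = 1 := by
    have h' : (((c₁ : ℤ) * d₁ : ℤ) : ZMod c₂) = ((1 : ℤ) : ZMod c₂) :=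
      (ZMod.intCast_eq_intCast_iff' _ _ _).mpr hd₁
    push_cast at h'
    exact h'
  have hkey : ((c₂ * d₂ + c₁ * d₁ : ℤ) : ZMod (c₁ * c₂)) = ((1 : ℤ) : ZMod (c₁ * c₂)) := by
    rw [ZMod.intCast_eq_intCast_iff']
    have hA : (c₁ : ℤ) ∣ (c₂ * d₂ + c₁ * d₁ - 1) := by
      have h' : (c₁ : ℤ) ∣ (c₂ * d₂ - 1) := Int.ModEq.dvd hd₂.symm
      have e : ((c₂ : ℤ) * d₂ + c₁ * d₁ - 1) = (c₂ * d₂ - 1) + c₁ * d₁ := by ring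
      rw [e]
      exact dvd_add h' (Dvd.intro _ rfl)
    have hB : (c₂ : ℤ) ∣ (c₂ * d₂ + c₁ * d₁ - 1) := by
      have h' : (c₂ : ℤ) ∣ (c₁ * d₁ - 1) := Int.ModEq.dvd hd₁.symm
      have e : ((c₂ : ℤ) * d₂ + c₁ * d₁ - 1) = (c₁ * d₁ - 1) + c₂ * d₂ := by ring
      rw [e]
      exact dvd_add h' (Dvd.intro _ rfl)
    have hcop : IsCoprime (c₁ : ℤ) (c₂ : ℤ) := by
      rw [Int.isCoprime_iff_gcd_eq_one]
      exact_mod_cast hco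
    have hdvd : ((c₁ : ℤ) * c₂) ∣ (c₂ * d₂ + c₁ * d₁ - 1) := hcop.mul_dvd hA hB
    have : ((c₁ * c₂ : ℕ) : ℤ) ∣ (c₂ * d₂ + c₁ * d₁ - 1) := by push_cast; exact hdvd
    exact (Int.modEq_iff_dvd.mpr (by simpa using this)).symm
  set E := ZMod.chineseRemainder hco with hE
  set T₁ : ZMod c₁ → ZMod c₁ → ℂ := fun x y =>
    Kl (d₂ * (γ * (x.val : ℤ) ^ 2 + B * x.val + C)) (d₂ * (γ * (y.val : ℤ) ^ 2 + B * y.val + C)) c₁ *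
      eC c₁ (d₂ * (2 * γ * x.val * y.val + x.val * (B + u) + y.val * (B + v))) with hT₁
  set T₂ : ZMod c₂ → ZMod c₂ → ℂ := fun x y =>
    Kl (d₁ * (γ * (x.val : ℤ) ^ 2 + B * x.val + C)) (d₁ * (γ * (y.val : ℤ) ^ 2 + B * y.val + C)) c₂ *
      eC c₂ (d₁ * (2 * γ * x.val * y.val + x.val * (B + u) + y.val * (B + v))) with hT₂
  have stepA : Sbc γ B C u v (c₁ * c₂)
      = ∑ a : ZMod (c₁ * c₂), ∑ b : ZMod (c₁ * c₂),
          T₁ (E a).1 (E b).1 * T₂ (E a).2 (E b).2 := by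
    rw [Sbc_zmod]
    refine Finset.sum_congr rfl fun a _ => Finset.sum_congr rfl fun b _ => ?_
    rw [Kl_mul c₁ c₂ hco d₁ d₂ hkey, eC_split h₁.ne' h₂.ne' hkey]
    have ha1 := val_crt₁ hco a
    have hb1 := val_crt₁ hco b
    have ha2 := val_crt₂ hco a
    have hb2 := val_crt₂ hco b
    rw [← hE] at ha1 hb1 ha2 hb2
    push_cast at ha1 hb1 ha2 hb2
    have e₁ : Kl (d₂ * (γ * (a.val : ℤ) ^ 2 + B * a.val + C))
        (d₂ * (γ * (b.val : ℤ) ^ 2 + B * b.val + C)) c₁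
        = Kl (d₂ * (γ * ((E a).1.val : ℤ) ^ 2 + B * (E a).1.val + C))
          (d₂ * (γ * ((E b).1.val : ℤ) ^ 2 + B * (E b).1.val + C)) c₁ := by
      refine Kl_congr h₁.ne' ?_ ?_
      · push_cast; rw [ha1]
      · push_cast; rw [hb1]
    have e₂ : Kl (d₁ * (γ * (a.val : ℤ) ^ 2 + B * a.val + C))
        (d₁ * (γ * (b.val : ℤ) ^ 2 + B * b.val + C)) c₂
        = Kl (d₁ * (γ * ((E a).2.val : ℤ) ^ 2 + B * (E a).2.val + C))
          (d₁ * (γ * ((E b).2.val : ℤ) ^ 2 + B * (E b).2.val + C)) c₂ := by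
      refine Kl_congr h₂.ne' ?_ ?_
      · push_cast; rw [ha2]
      · push_cast; rw [hb2]
    have f₁ : eC c₁ (d₂ * (2 * γ * a.val * b.val + a.val * (B + u) + b.val * (B + v)))
        = eC c₁ (d₂ * (2 * γ * (E a).1.val * (E b).1.val + (E a).1.val * (B + u)
            + (E b).1.val * (B + v))) := by
      apply eC_congr h₁.ne'
      push_cast
      rw [ha1, hb1]
    have f₂ : eC c₂ (d₁ * (2 * γ * a.val * b.val + a.val * (B + u) + b.val * (B + v)))
        = eC c₂ (d₁ * (2 * γ * (E a).2.val * (E b).2.val + (E a).2.val * (B + u)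
            + (E b).2.val * (B + v))) := by
      apply eC_congr h₂.ne'
      push_cast
      rw [ha2, hb2]
    rw [e₁, e₂, f₁, f₂, hT₁, hT₂]
    ring
  have stepB : (∑ a : ZMod (c₁ * c₂), ∑ b : ZMod (c₁ * c₂),
        T₁ (E a).1 (E b).1 * T₂ (E a).2 (E b).2)
      = (∑ x : ZMod c₁, ∑ y : ZMod c₁, T₁ x y) * (∑ x : ZMod c₂, ∑ y : ZMod c₂, T₂ x y) := by
    rw [← sum_factor T₁ T₂]
    rw [← Equiv.sum_comp E.toEquiv
      (fun p : ZMod c₁ × ZMod c₂ => ∑ q : ZMod c₁ × ZMod c₂, T₁ p.1 q.1 * T₂ p.2 q.2)]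
    refine Finset.sum_congr rfl fun a _ => ?_
    rw [← Equiv.sum_comp E.toEquiv
      (fun q : ZMod c₁ × ZMod c₂ => T₁ (E.toEquiv a).1 q.1 * T₂ (E.toEquiv a).2 q.2)]
    rfl
  have stepC₁ : (∑ x : ZMod c₁, ∑ y : ZMod c₁, T₁ x y) = Sbc (γ * c₂) B (C * d₂) u v c₁ := by
    rw [Sbc_zmod]
    set u₂ : (ZMod c₁)ˣ := ZMod.unitOfCoprime c₂ hco.symm with hu₂
    have hval : ∀ z : ZMod c₁, (((↑u₂ * z : ZMod c₁).val : ℕ) : ZMod c₁)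
        = (c₂ : ZMod c₁) * ((z.val : ℕ) : ZMod c₁) := by
      intro z
      rw [ZMod.natCast_rightInverse, ZMod.natCast_rightInverse, hu₂, ZMod.coe_unitOfCoprime]
    rw [← Equiv.sum_comp (Units.mulLeft u₂) (fun x => ∑ y : ZMod c₁, T₁ x y)]
    refine Finset.sum_congr rfl fun x _ => ?_
    rw [← Equiv.sum_comp (Units.mulLeft u₂) (fun y => T₁ ((Units.mulLeft u₂) x) y)]
    refine Finset.sum_congr rfl fun y _ => ?_
    show T₁ (↑u₂ * x) (↑u₂ * y) = _
    simp only [hT₁]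
    have hx := hval x
    have hy := hval y
    congr 1
    · refine Kl_congr h₁.ne' ?_ ?_
      · push_cast
        push_cast at hx
        rw [hx]
        linear_combination ((γ : ZMod c₁) * (c₂ : ZMod c₁) * ((x.val : ℕ) : ZMod c₁) ^ 2
          + (B : ZMod c₁) * ((x.val : ℕ) : ZMod c₁)) * hc₂d₂
      · push_cast
        push_cast at hy
        rw [hy]
        linear_combination ((γ : ZMod c₁) * (c₂ : ZMod c₁) * ((y.val : ℕ) : ZMod c₁) ^ 2
          + (B : ZMod c₁) * ((y.val : ℕ) : ZMod c₁)) * hc₂d₂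
    · apply eC_congr h₁.ne'
      push_cast
      push_cast at hx hy
      rw [hx, hy]
      linear_combination (2 * (γ : ZMod c₁) * (c₂ : ZMod c₁) * ((x.val : ℕ) : ZMod c₁)
        * ((y.val : ℕ) : ZMod c₁) + ((x.val : ℕ) : ZMod c₁) * ((B : ZMod c₁) + (u : ZMod c₁))
        + ((y.val : ℕ) : ZMod c₁) * ((B : ZMod c₁) + (v : ZMod c₁))) * hc₂d₂
  have stepC₂ : (∑ x : ZMod c₂, ∑ y : ZMod c₂, T₂ x y) = Sbc (γ * c₁) B (C * d₁) u v c₂ := by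
    rw [Sbc_zmod]
    set u₁ : (ZMod c₂)ˣ := ZMod.unitOfCoprime c₁ hco with hu₁
    have hval : ∀ z : ZMod c₂, (((↑u₁ * z : ZMod c₂).val : ℕ) : ZMod c₂)
        = (c₁ : ZMod c₂) * ((z.val : ℕ) : ZMod c₂) := by
      intro z
      rw [ZMod.natCast_rightInverse, ZMod.natCast_rightInverse, hu₁, ZMod.coe_unitOfCoprime]
    rw [← Equiv.sum_comp (Units.mulLeft u₁) (fun x => ∑ y : ZMod c₂, T₂ x y)]
    refine Finset.sum_congr rfl fun x _ => ?_
    rw [← Equiv.sum_comp (Units.mulLeft u₁) (fun y => T₂ ((Units.mulLeft u₁) x) y)]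
    refine Finset.sum_congr rfl fun y _ => ?_
    show T₂ (↑u₁ * x) (↑u₁ * y) = _
    simp only [hT₂]
    have hx := hval x
    have hy := hval y
    congr 1
    · refine Kl_congr h₂.ne' ?_ ?_
      · push_cast
        push_cast at hx
        rw [hx]
        linear_combination ((γ : ZMod c₂) * (c₁ : ZMod c₂) * ((x.val : ℕ) : ZMod c₂) ^ 2
          + (B : ZMod c₂) * ((x.val : ℕ) : ZMod c₂)) * hc₁d₁
      · push_cast
        push_cast at hy
        rw [hy]
        linear_combination ((γ : ZMod c₂) * (c₁ : ZMod c₂) * ((y.val : ℕ) : ZMod c₂) ^ 2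
          + (B : ZMod c₂) * ((y.val : ℕ) : ZMod c₂)) * hc₁d₁
    · apply eC_congr h₂.ne'
      push_cast
      push_cast at hx hy
      rw [hx, hy]
      linear_combination (2 * (γ : ZMod c₂) * (c₁ : ZMod c₂) * ((x.val : ℕ) : ZMod c₂)
        * ((y.val : ℕ) : ZMod c₂) + ((x.val : ℕ) : ZMod c₂) * ((B : ZMod c₂) + (u : ZMod c₂))
        + ((y.val : ℕ) : ZMod c₂) * ((B : ZMod c₂) + (v : ZMod c₂))) * hc₁d₁
  rw [stepA, stepB, stepC₁, stepC₂]
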